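/- arXiv:1702.03012 — 3 statements merged into one kernel-verified Lean document; each statement's English description precedes it below -/
import Mathlib

section
/- Suppose in addition that the rows of G are linearly independent (rank G = w). Then the k×k matrix [G*; G] obtained by stacking G* on top of G is invertible over 𝔽₂; equivalently, the encoding map m ↦ ([G*; G])ᵀ·m is a bijection of 𝔽₂^k. In particular, distinct choices of the last w coordinates of m (with the first k' coordinates fixed) yield 2^w distinct codewords within the same coset of C, and the message m is uniquely recoverable from x. -/
/-!
Put `M = [G*; G]` and `K = Hᵀ`, so that `G* K = 1` and `G K = 0`. If `(a, b) ᵥ* M = a G* + b G`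
vanishes, right multiplication by `K` gives `a = 0`, and then `b = 0` because the rows of `G` are
independent. So `m ↦ m M` is injective, which for a square matrix over a field means invertible.
-/

namespace Matrix

variable {R : Type*} [Ring R] {m p n : Type*} [Fintype m] [DecidableEq m] [Fintype p] [Fintype n]

lemma vecMul_fromRows_vecMul_eq_comp_inl {A : Matrix m n R} {B : Matrix p n R} {K : Matrix n m R}
    (hA : A * K = 1) (hB : B * K = 0) (x : m ⊕ p → R) :
    x ᵥ* fromRows A B ᵥ* K = x ∘ Sum.inl := by
  rw [vecMul_vecMul, fromRows_mul, hA, hB, vecMul_fromRows, vecMul_one, vecMul_zero, add_zero]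

lemma vecMul_fromRows_injective {A : Matrix m n R} {B : Matrix p n R} {K : Matrix n m R}
    (hA : A * K = 1) (hB : B * K = 0) (hBinj : Function.Injective B.vecMul) :
    Function.Injective (fromRows A B).vecMul := by
  intro x y (hxy : x ᵥ* fromRows A B = y ᵥ* fromRows A B)
  have hinl : x ∘ Sum.inl = y ∘ Sum.inl := by
    simpa only [vecMul_fromRows_vecMul_eq_comp_inl hA hB] using congrArg (· ᵥ* K) hxy
  have hinr : x ∘ Sum.inr = y ∘ Sum.inr := by
    apply hBinj
    simpa only [vecMul_fromRows, hinl, add_right_inj] using hxy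
  ext (i | i)
  exacts [congrFun hinl i, congrFun hinr i]

end Matrix

open Matrix

theorem stacked_generator_isUnit_general {w k' : ℕ}
    (H : Matrix (Fin k') (Fin (k' + w)) (ZMod 2))
    (G : Matrix (Fin w) (Fin (k' + w)) (ZMod 2))
    (Gstar : Matrix (Fin k') (Fin (k' + w)) (ZMod 2))
    (hHG : H * G.transpose = 0)
    (hHGstar : H * Gstar.transpose = 1)
    (hGrows : LinearIndependent (ZMod 2) (fun i : Fin w => G i)) :
    IsUnit ((Matrix.fromRows Gstar G).submatrix
        (finSumFinEquiv (m := k') (n := w)).symm id) ∧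
      Function.Bijective (fun m : Fin k' ⊕ Fin w → ZMod 2 =>
        (Matrix.fromRows Gstar G).transpose.mulVec m) := by
  have hGstarK : Gstar * Hᵀ = 1 := by simpa using congrArg transpose hHGstar
  have hGK : G * Hᵀ = 0 := by simpa using congrArg transpose hHG
  have hinj : Function.Injective (fromRows Gstar G).vecMul :=
    vecMul_fromRows_injective hGstarK hGK (vecMul_injective_iff.mpr hGrows)
  constructor
  · rw [← vecMul_injective_iff_isUnit]
    intro x y hxy
    simp only [submatrix_vecMul_equiv, Equiv.symm_symm, Function.comp_id] at hxy
    exact finSumFinEquiv.surjective.injective_comp_right (hinj hxy)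
  · simp only [mulVec_transpose]
    exact (Fintype.bijective_iff_injective_and_card _).mpr ⟨hinj, by simp⟩

/-- If moreover the rows of `G` are linearly independent (`rank G = w`),
then the stacked `k×k` matrix `[G*; G]` is invertible over `𝔽₂`; equivalently the encoding
map `m ↦ [G*; G]ᵀ·m` is a bijection of `𝔽₂^k`.  In particular distinct choices of the last
`w` message coordinates give distinct codewords within the same coset of `C`, and the
message `m` is uniquely recoverable from its encoding `x`. -/
theorem stacked_generator_isUnit {w k' : ℕ} (hw : 0 < w) (hk' : 0 < k')
    (H : Matrix (Fin k') (Fin (k' + w)) (ZMod 2))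
    (G : Matrix (Fin w) (Fin (k' + w)) (ZMod 2))
    (Gstar : Matrix (Fin k') (Fin (k' + w)) (ZMod 2))
    (hHG : H * G.transpose = 0)
    (hHGstar : H * Gstar.transpose = 1)
    (hGrows : LinearIndependent (ZMod 2) (fun i : Fin w => G i)) :
    IsUnit ((Matrix.fromRows Gstar G).submatrix
        (finSumFinEquiv (m := k') (n := w)).symm id) ∧
      Function.Bijective (fun m : Fin k' ⊕ Fin w → ZMod 2 =>
        (Matrix.fromRows Gstar G).transpose.mulVec m) :=
  stacked_generator_isUnit_general H G Gstar hHG hHGstar hGrows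
end

section
/- Let X be a random variable uniformly distributed on 𝔽₂^k, and let L : 𝔽₂^k → 𝔽₂^a and T : 𝔽₂^k → 𝔽₂^b be linear maps such that ker L + ker T = 𝔽₂^k. Then the random variables L(X) and T(X) are independent, and each is uniformly distributed on the range of the respective map. (This is the abstract independence principle underlying the individual security of the paper's linear coset code: the eavesdropper's linear observation is independent of the linear functional carrying the protected message bits.) -/
/-!
The law of a homomorphic image of a uniform element of a finite group is uniform on the image:
all fibres are cosets of the kernel, so they have the same size. Applied to `x ↦ (L x, T x)`,
whose image is `range L × range T` when `ker L + ker T` is the whole space, this makes the joint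
law of `L x` and `T x` the product of the two uniform laws on the ranges.
-/

open MeasureTheory ProbabilityTheory

instance : MeasurableSpace (ZMod 2) := ⊤
instance : MeasurableSingletonClass (ZMod 2) := ⟨fun _ => trivial⟩

namespace ProbabilityTheory

open Finset

lemma map_uniformOn_univ_eq_uniformOn_range {G H F : Type*} [AddGroup G] [Fintype G]
    [MeasurableSpace G] [MeasurableSingletonClass G] [AddGroup H] [MeasurableSpace H]
    [MeasurableSingletonClass H] [Countable H] [FunLike F G H] [AddMonoidHomClass F G H] (f : F) :
    (uniformOn (Set.univ : Set G)).map f = uniformOn (Set.range f) := by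
  classical
  refine Measure.ext_of_singleton fun u ↦ ?_
  have hfiber : f ⁻¹' {u} = ↑({g | f g = u} : Finset G) := by ext; simp
  have hrange : Set.range f = ↑(univ.image f) := by simp
  rw [Measure.map_apply .of_discrete (measurableSet_singleton u), hfiber, ← coe_univ,
    hrange, ← coe_singleton, uniformOn_apply_finset, uniformOn_apply_finset, univ_inter]
  by_cases hu : u ∈ Set.range f
  · have hcard : #(univ : Finset G) = #{g | f g = u} * #(univ.image f) := by
      rw [card_eq_sum_card_image f univ, sum_const_nat, mul_comm]
      rintro _ hv
      exact AddMonoidHom.card_fiber_eq_of_mem_range f (by simpa using hv) hu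
    have hu' : u ∈ univ.image f := by simpa using hu
    have hne : (#{g | f g = u} : ENNReal) ≠ 0 := by
      simpa [card_eq_zero, filter_eq_empty_iff] using hu
    rw [inter_singleton_of_mem hu', card_singleton, hcard, Nat.cast_mul,
      Nat.cast_one, ← ENNReal.mul_div_mul_left 1 _ hne (ENNReal.natCast_ne_top _), mul_one]
  · have hu' : u ∉ univ.image f := by simpa using hu
    rw [inter_singleton_of_notMem hu', filter_false_of_mem (by simpa using hu)]
    simp

lemma uniformOn_prod {α β : Type*} [MeasurableSpace α] [MeasurableSingletonClass α] [Finite α]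
    [MeasurableSpace β] [MeasurableSingletonClass β] [Finite β] (s : Set α) (t : Set β) :
    uniformOn (s ×ˢ t) = (uniformOn s).prod (uniformOn t) := by
  refine (Measure.prod_eq fun A B _ _ ↦ ?_).symm
  lift s to Finset α using s.toFinite
  lift t to Finset β using t.toFinite
  lift A to Finset α using A.toFinite
  lift B to Finset β using B.toFinite
  classical
  simp only [← coe_product, uniformOn_apply_finset, product_inter_product,
    card_product, Nat.cast_mul]
  exact ENNReal.mul_div_mul_comm (.inr (ENNReal.natCast_ne_top _)) (.inl (ENNReal.natCast_ne_top _))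

end ProbabilityTheory

/-- Let `X` be uniform on `𝔽₂^k` and let `L : 𝔽₂^k → 𝔽₂^a`,
`T : 𝔽₂^k → 𝔽₂^b` be linear maps with `ker L + ker T = 𝔽₂^k`.  Then `L(X)` and `T(X)`
are independent and each is uniformly distributed on the range of the respective map. -/
theorem linear_images_indep_of_ker_sup_eq_top {k a b : ℕ}
    (L : (Fin k → ZMod 2) →ₗ[ZMod 2] (Fin a → ZMod 2))
    (T : (Fin k → ZMod 2) →ₗ[ZMod 2] (Fin b → ZMod 2))
    (hker : LinearMap.ker L ⊔ LinearMap.ker T = ⊤) :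
    IndepFun (fun x => L x) (fun x => T x)
        (uniformOn (Set.univ : Set (Fin k → ZMod 2))) ∧
      Measure.map (fun x => L x) (uniformOn (Set.univ : Set (Fin k → ZMod 2))) =
        uniformOn (Set.range fun x => L x) ∧
      Measure.map (fun x => T x) (uniformOn (Set.univ : Set (Fin k → ZMod 2))) =
        uniformOn (Set.range fun x => T x) := by
  have hL := map_uniformOn_univ_eq_uniformOn_range L
  have hT := map_uniformOn_univ_eq_uniformOn_range T
  refine ⟨?_, hL, hT⟩
  have hrange : Set.range (L.prod T) = Set.range L ×ˢ Set.range T := by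
    rw [← LinearMap.coe_range, LinearMap.range_prod_eq hker]
    rfl
  rw [indepFun_iff_map_prod_eq_prod_map_map .of_discrete .of_discrete, hL, hT, ← uniformOn_prod,
    ← hrange]
  exact map_uniformOn_univ_eq_uniformOn_range (L.prod T)
end

section
/- (Individual security of the linear coset code.) Assume additionally that the rows of G are linearly independent (rank G = w), and let S be a set of w coordinate indices such that the w×w submatrix G_S of G (columns indexed by S) has rank w. Let M be uniformly distributed on 𝔽₂^{k'}, let K be uniformly distributed on 𝔽₂^{w}, with M and K independent, and set X = ([G*; G])ᵀ·(M, K) ∈ 𝔽₂^k (the encoding of message M with randomizing bits K). Then M and the restriction X|_S are independent random variables; equivalently I(M; X|_S) = 0 and H(M | X|_S) = H(M) = k'·log 2. Thus an eavesdropper observing the w coded coordinates in S learns nothing about the k' = k − w protected message bits. -/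
open MeasureTheory ProbabilityTheory

/-- Shannon entropy (natural-log base) of a finite-valued random variable. -/
noncomputable def entropy {Ω : Type*} [MeasurableSpace Ω] (μ : Measure Ω)
    {α : Type*} [Fintype α] (X : Ω → α) : ℝ :=
  -∑ a : α, ((μ (X ⁻¹' {a})).toReal * Real.log (μ (X ⁻¹' {a})).toReal)

/-- Conditional entropy `H(X|Y) = H(X,Y) - H(Y)`. -/
noncomputable def condEntropy {Ω : Type*} [MeasurableSpace Ω] (μ : Measure Ω)
    {α β : Type*} [Fintype α] [Fintype β] (X : Ω → α) (Y : Ω → β) : ℝ :=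
  entropy μ (fun ω => (X ω, Y ω)) - entropy μ Y

/-- Mutual information `I(X;Y) = H(X) + H(Y) - H(X,Y)`. -/
noncomputable def mutualInfo {Ω : Type*} [MeasurableSpace Ω] (μ : Measure Ω)
    {α β : Type*} [Fintype α] [Fintype β] (X : Ω → α) (Y : Ω → β) : ℝ :=
  entropy μ X + entropy μ Y - entropy μ (fun ω => (X ω, Y ω))

/-- Conditional mutual information `I(X;Y|Z) = H(X|Z) + H(Y|Z) - H(X,Y|Z)`. -/
noncomputable def condMutualInfo {Ω : Type*} [MeasurableSpace Ω] (μ : Measure Ω)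
    {α β γ : Type*} [Fintype α] [Fintype β] [Fintype γ]
    (X : Ω → α) (Y : Ω → β) (Z : Ω → γ) : ℝ :=
  condEntropy μ X Z + condEntropy μ Y Z - condEntropy μ (fun ω => (X ω, Y ω)) Z

/-! On the coordinates in `S` the encoding reads `X|_S = M G*_S + K G_S`, and since `G_S` is a
square matrix of full rank, `k ↦ k G_S` is a bijection. So for each fixed message `m`, `X|_S` is a
bijective image of the uniform key `K`, which is independent of `M`: the key acts as a one-time
pad, the joint law of `(M, X|_S)` is `law M ⊗ uniform`, and the entropy identities follow from
additivity of entropy over independent pairs. -/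

open scoped ENNReal

section

variable {Ω α β : Type*} [MeasurableSpace Ω] {μ : Measure Ω}

lemma aemeasurable_of_map_eq_uniform [Fintype α] [Nonempty α] [MeasurableSpace α] {X : Ω → α}
    (hX : μ.map X = (PMF.uniformOfFintype α).toMeasure) : AEMeasurable X μ :=
  .of_map_ne_zero (hX ▸ IsProbabilityMeasure.ne_zero _)

lemma entropy_eq_sum_negMulLog [Fintype α] (X : Ω → α) :
    entropy μ X = ∑ a, Real.negMulLog (μ (X ⁻¹' {a})).toReal := by
  simp [entropy, Real.negMulLog, Finset.sum_neg_distrib]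

section Discrete

variable [Fintype α] [Fintype β] [MeasurableSpace α] [MeasurableSingletonClass α]
  [MeasurableSpace β] [MeasurableSingletonClass β]

lemma measure_preimage_singleton_of_map_eq_uniform [Nonempty α] {X : Ω → α}
    (hX : μ.map X = (PMF.uniformOfFintype α).toMeasure) (a : α) :
    μ (X ⁻¹' {a}) = (Fintype.card α : ℝ≥0∞)⁻¹ := by
  rw [← Measure.map_apply_of_aemeasurable (aemeasurable_of_map_eq_uniform hX)
    (measurableSet_singleton a), hX,
    PMF.toMeasure_apply_singleton _ _ (measurableSet_singleton a), PMF.uniformOfFintype_apply]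

lemma entropy_eq_log_card_of_map_eq_uniform [Nonempty α] {X : Ω → α}
    (hX : μ.map X = (PMF.uniformOfFintype α).toMeasure) :
    entropy μ X = Real.log (Fintype.card α) := by
  simp [entropy_eq_sum_negMulLog, measure_preimage_singleton_of_map_eq_uniform hX,
    Real.negMulLog]

section Independent

variable [IsProbabilityMeasure μ]

lemma sum_measure_preimage_singleton_toReal {X : Ω → α} (hX : AEMeasurable X μ) :
    ∑ a, (μ (X ⁻¹' {a})).toReal = 1 := by
  simp_rw [← Measure.map_apply_of_aemeasurable hX (measurableSet_singleton _)]
  rw [← ENNReal.toReal_sum (fun a _ => measure_ne_top _ _), sum_measure_singleton]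
  simp [Measure.map_apply_of_aemeasurable hX MeasurableSet.univ]

lemma ProbabilityTheory.IndepFun.entropy_prodMk {X : Ω → α} {Y : Ω → β} (hX : AEMeasurable X μ)
    (hY : AEMeasurable Y μ) (hXY : IndepFun X Y μ) :
    entropy μ (fun ω => (X ω, Y ω)) = entropy μ X + entropy μ Y := by
  have hfiber (a : α) (b : β) : μ ((fun ω => (X ω, Y ω)) ⁻¹' {(a, b)}) =
      μ (X ⁻¹' {a}) * μ (Y ⁻¹' {b}) := by
    rw [← Set.singleton_prod_singleton, Set.mk_preimage_prod]
    exact hXY.measure_inter_preimage_eq_mul _ _ (measurableSet_singleton a)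
      (measurableSet_singleton b)
  simp only [entropy_eq_sum_negMulLog, Fintype.sum_prod_type, hfiber, ENNReal.toReal_mul,
    Real.negMulLog_mul, Finset.sum_add_distrib, ← Finset.mul_sum, ← Finset.sum_mul,
    sum_measure_preimage_singleton_toReal hX, sum_measure_preimage_singleton_toReal hY, one_mul]

lemma mutualInfo_eq_zero_of_indepFun {X : Ω → α} {Y : Ω → β} (hX : AEMeasurable X μ)
    (hY : AEMeasurable Y μ) (hXY : IndepFun X Y μ) : mutualInfo μ X Y = 0 := by
  rw [mutualInfo, hXY.entropy_prodMk hX hY, sub_self]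

lemma condEntropy_eq_entropy_of_indepFun {X : Ω → α} {Y : Ω → β} (hX : AEMeasurable X μ)
    (hY : AEMeasurable Y μ) (hXY : IndepFun X Y μ) : condEntropy μ X Y = entropy μ X := by
  rw [condEntropy, hXY.entropy_prodMk hX hY, add_sub_cancel_right]

end Independent

variable {γ : Type*} [Fintype γ] [Nonempty β] [Nonempty γ] [MeasurableSpace γ]
  [MeasurableSingletonClass γ]

lemma map_fiberwiseEquiv_prod_uniformOfFintype (ν : Measure α) (e : α → β ≃ γ) :
    (ν.prod (PMF.uniformOfFintype β).toMeasure).map (fun p => (p.1, e p.1 p.2)) =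
      ν.prod (PMF.uniformOfFintype γ).toMeasure := by
  refine Measure.ext_of_singleton fun ⟨a, c⟩ => ?_
  have hfiber : (fun p : α × β => (p.1, e p.1 p.2)) ⁻¹' {(a, c)} = {a} ×ˢ {(e a).symm c} := by
    ext ⟨a', b⟩
    simp only [Set.mem_preimage, Set.mem_singleton_iff, Set.mem_prod, Prod.mk.injEq]
    exact and_congr_right fun ha => ha ▸ (e a').eq_symm_apply.symm
  rw [Measure.map_apply (measurable_of_countable _) (measurableSet_singleton _), hfiber,
    ← Set.singleton_prod_singleton, Measure.prod_prod, Measure.prod_prod]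
  simp only [PMF.toMeasure_apply_singleton _ _ (measurableSet_singleton _),
    PMF.uniformOfFintype_apply, Fintype.card_congr (e a)]

lemma ProbabilityTheory.IndepFun.indepFun_equiv_apply_of_uniform [IsProbabilityMeasure μ]
    {X : Ω → α} {K : Ω → β} (hX : AEMeasurable X μ)
    (hK : μ.map K = (PMF.uniformOfFintype β).toMeasure) (hXK : IndepFun X K μ)
    (e : α → β ≃ γ) : IndepFun X (fun ω => e (X ω) (K ω)) μ := by
  have hKm : AEMeasurable K μ := aemeasurable_of_map_eq_uniform hK
  have hY : AEMeasurable (fun ω => e (X ω) (K ω)) μ :=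
    (measurable_of_countable fun p : α × β => e p.1 p.2).comp_aemeasurable (hX.prodMk hKm)
  have hjoint : μ.map (fun ω => (X ω, e (X ω) (K ω))) =
      (μ.map X).prod (PMF.uniformOfFintype γ).toMeasure := by
    rw [← map_fiberwiseEquiv_prod_uniformOfFintype (μ.map X) e, ← hK,
      ← (indepFun_iff_map_prod_eq_prod_map_map hX hKm).1 hXK,
      AEMeasurable.map_map_of_aemeasurable (measurable_of_countable _).aemeasurable
        (hX.prodMk hKm)]
    rfl
  have hlaw : μ.map (fun ω => e (X ω) (K ω)) = (PMF.uniformOfFintype γ).toMeasure := by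
    have := Measure.isProbabilityMeasure_map (μ := μ) hX
    calc μ.map (fun ω => e (X ω) (K ω))
        = (μ.map fun ω => (X ω, e (X ω) (K ω))).map Prod.snd :=
          (AEMeasurable.map_map_of_aemeasurable measurable_snd.aemeasurable (hX.prodMk hY)).symm
      _ = (PMF.uniformOfFintype γ).toMeasure := by
          rw [hjoint, Measure.map_snd_prod, measure_univ, one_smul]
  rw [indepFun_iff_map_prod_eq_prod_map_map hX hY, hjoint, hlaw]

end Discrete

end

theorem Matrix.vecMul_bijective_of_rank_eq {m n K : Type*} [Field K] [Fintype m] [Fintype n]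
    (A : Matrix m n K) (hA : A.rank = Fintype.card n) (hmn : Fintype.card m = Fintype.card n) :
    Function.Bijective A.vecMul := by
  have hsurj : Function.Surjective A.vecMulLinear := by
    rw [← LinearMap.range_eq_top]
    apply Submodule.eq_top_of_finrank_eq
    rw [range_vecMulLinear, ← Matrix.rank_eq_finrank_span_row, hA,
      Module.finrank_fintype_fun_eq_card]
  exact ⟨(LinearMap.injective_iff_surjective_of_finrank_eq_finrank (by simp [hmn])).2 hsurj,
    hsurj⟩

theorem individual_security_of_linear_coset_code_general {w k' : ℕ}
    (G : Matrix (Fin w) (Fin (k' + w)) (ZMod 2))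
    (Gstar : Matrix (Fin k') (Fin (k' + w)) (ZMod 2))
    (S : Finset (Fin (k' + w))) (hScard : S.card = w)
    (hGS : (G.submatrix id (fun i : S => (i : Fin (k' + w)))).rank = w)
    {Ω : Type*} [MeasurableSpace Ω] (μ : Measure Ω) [IsProbabilityMeasure μ]
    (M : Ω → Fin k' → ZMod 2) (K : Ω → Fin w → ZMod 2)
    (hM : Measure.map M μ = (PMF.uniformOfFintype (Fin k' → ZMod 2)).toMeasure)
    (hK : Measure.map K μ = (PMF.uniformOfFintype (Fin w → ZMod 2)).toMeasure)
    (hMK : IndepFun M K μ)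
    (X : Ω → Fin (k' + w) → ZMod 2)
    (hX : ∀ ω, X ω = (Matrix.fromRows Gstar G).transpose.mulVec (Sum.elim (M ω) (K ω))) :
    IndepFun M (fun ω => fun i : S => X ω i) μ ∧
      mutualInfo μ M (fun ω => fun i : S => X ω i) = 0 ∧
      condEntropy μ M (fun ω => fun i : S => X ω i) = entropy μ M ∧
      entropy μ M = k' * Real.log 2 := by
  set GS := G.submatrix id (fun i : S => (i : Fin (k' + w)))
  have hbij : Function.Bijective GS.vecMul :=
    GS.vecMul_bijective_of_rank_eq (by simpa [hScard] using hGS) (by simp [hScard])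
  let e (m : Fin k' → ZMod 2) : (Fin w → ZMod 2) ≃ (S → ZMod 2) :=
    (Equiv.ofBijective _ hbij).trans (Equiv.addLeft fun i : S => Matrix.vecMul m Gstar i)
  have hXS : (fun ω => fun i : S => X ω i) = fun ω => e (M ω) (K ω) := by
    funext ω i
    rw [hX, Matrix.mulVec_transpose, Matrix.sumElim_vecMul_fromRows]
    rfl
  -- Forget the definition of `e`: unfolding it makes the unifier time out below.
  clear_value e
  have hMm : AEMeasurable M μ := aemeasurable_of_map_eq_uniform hM
  have hYm : AEMeasurable (fun ω => e (M ω) (K ω)) μ :=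
    (measurable_of_countable fun p : _ × _ => e p.1 p.2).comp_aemeasurable
      (hMm.prodMk (aemeasurable_of_map_eq_uniform hK))
  have hindep : IndepFun M (fun ω => e (M ω) (K ω)) μ :=
    hMK.indepFun_equiv_apply_of_uniform hMm hK e
  rw [hXS]
  refine ⟨hindep, mutualInfo_eq_zero_of_indepFun hMm hYm hindep,
    condEntropy_eq_entropy_of_indepFun hMm hYm hindep, ?_⟩
  rw [entropy_eq_log_card_of_map_eq_uniform hM, Fintype.card_fun, ZMod.card, Fintype.card_fin,
    Nat.cast_pow, Nat.cast_ofNat, Real.log_pow]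

/-- **Individual security of the linear coset code.**
With `k = k' + w`, `H·Gᵀ = 0`, `H·(G*)ᵀ = I`, the rows of `G` linearly independent, and
`S` a set of `w` coordinates whose submatrix `G_S` has rank `w`: if `M` is uniform on
`𝔽₂^{k'}`, `K` is uniform on `𝔽₂^{w}`, `M` and `K` are independent, and
`X = [G*; G]ᵀ·(M, K)` is the encoding, then `M` and `X|_S` are independent; equivalently
`I(M; X|_S) = 0` and `H(M | X|_S) = H(M) = k'·log 2`. -/
theorem individual_security_of_linear_coset_code {w k' : ℕ} (hw : 0 < w) (hk' : 0 < k')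
    (H : Matrix (Fin k') (Fin (k' + w)) (ZMod 2))
    (G : Matrix (Fin w) (Fin (k' + w)) (ZMod 2))
    (Gstar : Matrix (Fin k') (Fin (k' + w)) (ZMod 2))
    (hHG : H * G.transpose = 0)
    (hHGstar : H * Gstar.transpose = 1)
    (hGrows : LinearIndependent (ZMod 2) (fun i : Fin w => G i))
    (S : Finset (Fin (k' + w))) (hScard : S.card = w)
    (hGS : (G.submatrix id (fun i : S => (i : Fin (k' + w)))).rank = w)
    {Ω : Type*} [MeasurableSpace Ω] (μ : Measure Ω) [IsProbabilityMeasure μ]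
    (M : Ω → Fin k' → ZMod 2) (K : Ω → Fin w → ZMod 2)
    (hM : Measure.map M μ = (PMF.uniformOfFintype (Fin k' → ZMod 2)).toMeasure)
    (hK : Measure.map K μ = (PMF.uniformOfFintype (Fin w → ZMod 2)).toMeasure)
    (hMK : IndepFun M K μ)
    (X : Ω → Fin (k' + w) → ZMod 2)
    (hX : ∀ ω, X ω = (Matrix.fromRows Gstar G).transpose.mulVec (Sum.elim (M ω) (K ω))) :
    IndepFun M (fun ω => fun i : S => X ω i) μ ∧
      mutualInfo μ M (fun ω => fun i : S => X ω i) = 0 ∧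
      condEntropy μ M (fun ω => fun i : S => X ω i) = entropy μ M ∧
      entropy μ M = k' * Real.log 2 :=
  individual_security_of_linear_coset_code_general G Gstar S hScard hGS μ M K hM hK hMK X hX
end
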